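/- (Theorem 3, D4: vanishing of the strength score at infinity.) Let θ*: 𝒳 → ℝ be measurable and set H(t) = E_{X∼F}[σ(t − θ*(X))]. Suppose H(θ*(y)) = r_F(y) for every y ∈ 𝒳, and let (y_m) be a sequence with r_F(y_m) → 0. Then θ*(y_m) → −∞ and hence the strength score s*(y_m) = exp{θ*(y_m)} → 0. In particular, this conclusion holds whenever P_{Z∼F}{δ(Z, y_m) ≤ M} → 0 for every fixed M > 0 and δ(Z, X) < ∞ almost surely for independent Z, X ∼ F. -/
import Mathlib


open MeasureTheory Filter ENNReal

/-- The logistic function `σ(t) = 1/(1+e^{-t})`. -/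
noncomputable def logistic (t : ℝ) : ℝ := 1 / (1 + Real.exp (-t))

/-- The preference probability `p_F(x,y) = P_{Z∼F}{δ(Z,x) > δ(Z,y)}` for an
`[0,∞]`-valued dissimilarity. -/
noncomputable def prefProb {X : Type*} [MeasurableSpace X] (F : Measure X)
    (δ : X → X → ℝ≥0∞) (x y : X) : ℝ :=
  (F {z | δ z y < δ z x}).toReal

/-- The preference centrality `r_F(y) = E_{X∼F}[p_F(X,y)]`. -/
noncomputable def prefCentrality {X : Type*} [MeasurableSpace X] (F : Measure X)
    (δ : X → X → ℝ≥0∞) (y : X) : ℝ :=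
  ∫ x, prefProb F δ x y ∂F

lemma logistic_pos (t : ℝ) : 0 < logistic t := by
  unfold logistic; positivity

lemma logistic_le_one (t : ℝ) : logistic t ≤ 1 := by
  unfold logistic
  rw [div_le_one (by positivity)]
  nlinarith [Real.exp_pos (-t)]

lemma logistic_mono : Monotone logistic := by
  intro a b h
  unfold logistic
  apply one_div_le_one_div_of_le (by positivity)
  have : Real.exp (-b) ≤ Real.exp (-a) := Real.exp_le_exp.2 (by linarith)
  linarith

lemma logistic_cont : Continuous logistic := by
  apply continuous_const.div
  · exact continuous_const.add (Real.continuous_exp.comp continuous_neg)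
  · intro t; positivity

section Part1

variable {X : Type*} [MeasurableSpace X] (F : Measure X) [IsProbabilityMeasure F]

lemma H_integrable (θs : X → ℝ) (hθm : Measurable θs) (t : ℝ) :
    Integrable (fun x => logistic (t - θs x)) F := by
  refine Integrable.mono' (integrable_const 1) ?_ ?_
  · exact ((logistic_cont.measurable).comp (measurable_const.sub hθm)).aestronglyMeasurable
  · filter_upwards with x
    rw [Real.norm_eq_abs, abs_of_pos (logistic_pos _)]
    exact logistic_le_one _

lemma part1 (θs : X → ℝ) (hθm : Measurable θs) {δ : X → X → ℝ≥0∞}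
    (hcal : ∀ y : X, (∫ x, logistic (θs y - θs x) ∂F) = prefCentrality F δ y)
    (y : ℕ → X) (hr : Tendsto (fun m => prefCentrality F δ (y m)) atTop (nhds 0)) :
    Tendsto (fun m => θs (y m)) atTop atBot ∧
      Tendsto (fun m => Real.exp (θs (y m))) atTop (nhds 0) := by
  have h1 : Tendsto (fun m => θs (y m)) atTop atBot := by
    rw [tendsto_atBot]
    intro b
    have hHb : 0 < ∫ x, logistic (b - θs x) ∂F := by
      rw [integral_pos_iff_support_of_nonneg (fun x => (logistic_pos _).le)
        (H_integrable F θs hθm b)]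
      have : Function.support (fun x => logistic (b - θs x)) = Set.univ := by
        ext x; simp [Function.mem_support, (logistic_pos (b - θs x)).ne']
      rw [this]
      simp
    have hev : ∀ᶠ m in atTop, prefCentrality F δ (y m) < ∫ x, logistic (b - θs x) ∂F :=
      hr (Iio_mem_nhds hHb)
    filter_upwards [hev] with m hm
    by_contra hlt
    push_neg at hlt
    have : (∫ x, logistic (b - θs x) ∂F) ≤ ∫ x, logistic (θs (y m) - θs x) ∂F := by
      apply integral_mono (H_integrable F θs hθm b) (H_integrable F θs hθm _)
      intro x
      exact logistic_mono (by linarith)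
    rw [hcal (y m)] at this
    linarith
  exact ⟨h1, Real.tendsto_exp_atBot.comp h1⟩

end Part1


/-- Theorem 3, D4: vanishing of the strength score at infinity:
if `H(θ*(y)) = r_F(y)` for every `y`, where `H(t) = E_{X∼F}[σ(t - θ*(X))]`, then
along any sequence with `r_F(y_m) → 0` we have `θ*(y_m) → -∞` and
`s*(y_m) = exp{θ*(y_m)} → 0`; in particular this holds whenever
`P_{Z∼F}{δ(Z,y_m) ≤ M} → 0` for every fixed `M > 0` and `δ(Z,X) < ∞` a.s.
for independent `Z, X ∼ F`. -/
theorem strength_score_vanishes_at_infinity {X : Type*} [MeasurableSpace X]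
    (F : Measure X) [IsProbabilityMeasure F]
    (δ : X → X → ℝ≥0∞) (hδ : Measurable fun q : X × X => δ q.1 q.2)
    (θs : X → ℝ) (hθm : Measurable θs)
    (hcal : ∀ y : X, (∫ x, logistic (θs y - θs x) ∂F) = prefCentrality F δ y)
    (y : ℕ → X) :
    (Tendsto (fun m => prefCentrality F δ (y m)) atTop (nhds 0) →
      Tendsto (fun m => θs (y m)) atTop atBot ∧
      Tendsto (fun m => Real.exp (θs (y m))) atTop (nhds 0)) ∧
    ((∀ M : ℝ≥0∞, 0 < M → M ≠ ⊤ →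
        Tendsto (fun m => F {z | δ z (y m) ≤ M}) atTop (nhds 0)) →
      (∀ᵐ q ∂(F.prod F), δ q.1 q.2 < ⊤) →
      Tendsto (fun m => θs (y m)) atTop atBot ∧
      Tendsto (fun m => Real.exp (θs (y m))) atTop (nhds 0)) := by
  constructor
  · exact part1 F θs hθm hcal y
  · intro hM hae
    apply part1 F θs hθm hcal y
    -- show prefCentrality F δ (y m) → 0
    -- measurability helpers
    have hmeasδ2 : ∀ y0 : X, Measurable (fun z : X => δ z y0) := fun y0 =>
      hδ.comp (measurable_id.prodMk measurable_const)
    have hslice : ∀ y0 : X, Measurable (fun x : X => F {z | δ z y0 < δ z x}) := by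
      intro y0
      have hs : MeasurableSet {p : X × X | δ p.2 y0 < δ p.2 p.1} := by
        apply measurableSet_lt
        · exact hδ.comp (measurable_snd.prodMk measurable_const)
        · exact hδ.comp (measurable_snd.prodMk measurable_fst)
      have h := measurable_measure_prodMk_left (ν := F) hs
      simp only [Set.preimage_setOf_eq] at h
      exact h
    have hrepr : ∀ y0 : X, prefCentrality F δ y0
        = (∫⁻ x, F {z | δ z y0 < δ z x} ∂F).toReal := by
      intro y0
      unfold prefCentrality prefProb
      rw [integral_toReal (hslice y0).aemeasurable]
      filter_upwards with x
      exact lt_of_le_of_lt prob_le_one one_lt_top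
    -- a.e. finiteness gives: (F.prod F) {q | δ q.1 q.2 = ⊤} = 0
    have hzero : (F.prod F) {q : X × X | δ q.1 q.2 = ⊤} = 0 := by
      have := hae
      rw [ae_iff] at this
      convert this using 2
      ext q
      simp [lt_top_iff_ne_top]
    -- continuity from above
    set s : ℕ → Set (X × X) := fun n => {q | (n : ℝ≥0∞) < δ q.1 q.2} with hs_def
    have hsm : ∀ n, MeasurableSet (s n) := fun n => measurableSet_lt measurable_const hδ
    have hanti : Antitone s := by
      intro a b hab q hq
      simp only [hs_def, Set.mem_setOf_eq] at hq ⊢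
      exact lt_of_le_of_lt (show (a:ℝ≥0∞) ≤ b by exact_mod_cast hab) hq
    have hiInter : ⋂ n, s n = {q : X × X | δ q.1 q.2 = ⊤} := by
      ext q
      simp only [Set.mem_iInter, hs_def, Set.mem_setOf_eq]
      constructor
      · intro h
        by_contra hne
        obtain ⟨n, hn⟩ := ENNReal.exists_nat_gt hne
        exact absurd (h n) (not_lt.2 hn.le)
      · intro h n; rw [h]; exact natCast_lt_top n
    have htend : Tendsto (fun n => (F.prod F) (s n)) atTop (nhds 0) := by
      have := tendsto_measure_iInter_atTop (μ := F.prod F)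
        (fun n => (hsm n).nullMeasurableSet) hanti ⟨0, measure_ne_top _ _⟩
      rw [hiInter, hzero] at this
      exact this
    -- main tendsto via order
    rw [tendsto_order]
    constructor
    · intro a ha
      filter_upwards with m
      calc a < 0 := ha
        _ ≤ prefCentrality F δ (y m) := integral_nonneg fun x => toReal_nonneg
    · intro a ha
      -- pick n with (F.prod F) (s n) < ofReal (a/2), n ≥ 1
      have h2 : ∀ᶠ n in atTop, (F.prod F) (s n) < ENNReal.ofReal (a / 2) :=
        htend (Iio_mem_nhds (by rw [ENNReal.ofReal_pos]; linarith))
      obtain ⟨n, hn1, hn2⟩ := ((eventually_ge_atTop 1).and h2).exists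
      have hsB : MeasurableSet {p : X × X | (n : ℝ≥0∞) < δ p.2 p.1} :=
        measurableSet_lt measurable_const (hδ.comp (measurable_snd.prodMk measurable_fst))
      have hprod : (∫⁻ x, F {z | (n : ℝ≥0∞) < δ z x} ∂F) = (F.prod F) (s n) := by
        have h1 : (F.prod F) {p : X × X | (n : ℝ≥0∞) < δ p.2 p.1}
            = ∫⁻ x, F {z | (n : ℝ≥0∞) < δ z x} ∂F := by
          rw [Measure.prod_apply hsB]
          simp only [Set.preimage_setOf_eq]
        have h2' : (F.prod F) {p : X × X | (n : ℝ≥0∞) < δ p.2 p.1} = (F.prod F) (s n) := by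
          have hpre : {p : X × X | (n : ℝ≥0∞) < δ p.2 p.1} = Prod.swap ⁻¹' (s n) := by
            ext q; simp [hs_def, Prod.swap]
          rw [hpre, ← Measure.map_apply measurable_swap (hsm n), Measure.prod_swap]
        rw [← h1, h2']
      -- the bound
      have hbound : ∀ m, prefCentrality F δ (y m)
          ≤ (F {z | δ z (y m) ≤ (n : ℝ≥0∞)}).toReal + ((F.prod F) (s n)).toReal := by
        intro m
        rw [hrepr (y m)]
        have hsub : ∀ x, {z | δ z (y m) < δ z x}
            ⊆ {z | δ z (y m) ≤ (n : ℝ≥0∞)} ∪ {z | (n : ℝ≥0∞) < δ z x} := by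
          intro x z hz
          rcases le_or_gt (δ z (y m)) (n : ℝ≥0∞) with h | h
          · exact Or.inl h
          · exact Or.inr (lt_trans h hz)
        have hl1 : (∫⁻ x, F {z | δ z (y m) < δ z x} ∂F)
            ≤ F {z | δ z (y m) ≤ (n : ℝ≥0∞)} + (F.prod F) (s n) := by
          have step1 : (∫⁻ x, F {z | δ z (y m) < δ z x} ∂F)
              ≤ ∫⁻ x, (F {z | δ z (y m) ≤ (n : ℝ≥0∞)} + F {z | (n : ℝ≥0∞) < δ z x}) ∂F := by
            apply lintegral_mono
            intro x
            exact le_trans (measure_mono (hsub x)) (measure_union_le _ _)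
          rw [lintegral_add_left measurable_const, lintegral_const, hprod,
            measure_univ, mul_one] at step1
          exact step1
        calc (∫⁻ x, F {z | δ z (y m) < δ z x} ∂F).toReal
            ≤ (F {z | δ z (y m) ≤ (n : ℝ≥0∞)} + (F.prod F) (s n)).toReal :=
              ENNReal.toReal_mono (by finiteness) hl1
          _ = (F {z | δ z (y m) ≤ (n : ℝ≥0∞)}).toReal + ((F.prod F) (s n)).toReal :=
              ENNReal.toReal_add (measure_ne_top _ _) (measure_ne_top _ _)
      -- first term small eventually
      have hMn := hM (n : ℝ≥0∞) (by exact_mod_cast Nat.pos_of_ne_zero (by omega))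
        (natCast_ne_top n)
      have hev : ∀ᶠ m in atTop, F {z | δ z (y m) ≤ (n : ℝ≥0∞)} < ENNReal.ofReal (a / 2) :=
        hMn (Iio_mem_nhds (by rw [ENNReal.ofReal_pos]; linarith))
      filter_upwards [hev] with m hm
      have t1 : (F {z | δ z (y m) ≤ (n : ℝ≥0∞)}).toReal < a / 2 :=
        ENNReal.toReal_lt_of_lt_ofReal hm
      have t2 : ((F.prod F) (s n)).toReal < a / 2 :=
        ENNReal.toReal_lt_of_lt_ofReal hn2
      calc prefCentrality F δ (y m)
          ≤ (F {z | δ z (y m) ≤ (n : ℝ≥0∞)}).toReal + ((F.prod F) (s n)).toReal := hbound m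
        _ < a := by linarith
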